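/- arXiv:1103.0169 — 3 statements merged into one kernel-verified Lean document; each statement's English description precedes it below -/
import Mathlib

section
/- Let M be an invertible real n×n matrix that is exponentially stable (there exist c, β > 0 with ‖e^{Mt}‖ ≤ c e^{-βt} for all t ≥ 0), and let x̃ : ℝ → ℝⁿ be C² with bounded first and second derivatives. Then the function x(t) = -∫₀^∞ e^{Mu} M x̃(t-u) du satisfies x'(t) = M(x(t) - x̃(t)) for all t. -/
open Filter Set MeasureTheory Topology

/-!
Write `v = M xQ`. Differentiating under the integral sign (dominated by `c ‖M‖ C e^{-βu}`) gives
`x'(t) = -∫₀^∞ e^{uM} v'(t - u) du`. Integrating by parts in `u`, with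
`∂ᵤ (e^{uM} v(t - u)) = M e^{uM} v(t - u) - e^{uM} v'(t - u)` and `e^{uM} v(t - u) → 0`, gives
`∫₀^∞ e^{uM} v'(t - u) du = M ∫₀^∞ e^{uM} v(t - u) du + v(t)`, that is `x'(t) = M x(t) - M xQ(t)`.
-/

variable {E : Type*} [NormedAddCommGroup E] [NormedSpace ℝ E]

noncomputable def expConvolution (M : E →L[ℝ] E) (v : ℝ → E) (t : ℝ) : E :=
  ∫ u in Ioi (0 : ℝ), NormedSpace.exp (u • M) (v (t - u))

section Stable

variable {M : E →L[ℝ] E} {c β : ℝ}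

theorem norm_exp_smul_apply_le
    (hstab : ∀ t : ℝ, 0 ≤ t → ‖NormedSpace.exp (t • M)‖ ≤ c * Real.exp (-β * t))
    {u : ℝ} (hu : 0 ≤ u) {w : E} {K : ℝ} (hw : ‖w‖ ≤ K) :
    ‖NormedSpace.exp (u • M) w‖ ≤ c * K * Real.exp (-β * u) :=
  calc ‖NormedSpace.exp (u • M) w‖ ≤ ‖NormedSpace.exp (u • M)‖ * K :=
        (NormedSpace.exp (u • M)).le_opNorm_of_le hw
    _ ≤ c * Real.exp (-β * u) * K :=
        mul_le_mul_of_nonneg_right (hstab u hu) ((norm_nonneg w).trans hw)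
    _ = c * K * Real.exp (-β * u) := by ring

theorem tendsto_exp_smul_apply_atTop_zero (hβ : 0 < β)
    (hstab : ∀ t : ℝ, 0 ≤ t → ‖NormedSpace.exp (t • M)‖ ≤ c * Real.exp (-β * t))
    {w : ℝ → E} {K : ℝ} (hK : ∀ s, ‖w s‖ ≤ K) :
    Tendsto (fun u => NormedSpace.exp (u • M) (w u)) atTop (𝓝 0) := by
  have hdecay : Tendsto (fun u : ℝ => c * K * Real.exp (-β * u)) atTop (𝓝 0) := by
    simpa using (Real.tendsto_exp_atBot.comp
      (tendsto_id.const_mul_atTop_of_neg (neg_lt_zero.2 hβ))).const_mul (c * K)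
  refine squeeze_zero_norm' ?_ hdecay
  filter_upwards [eventually_ge_atTop (0 : ℝ)] with u hu
  exact norm_exp_smul_apply_le hstab hu (hK u)

variable [CompleteSpace E]

theorem continuous_exp_smul (M : E →L[ℝ] E) : Continuous fun u : ℝ => NormedSpace.exp (u • M) :=
  (differentiable_exp_smul_const ℝ M).continuous

theorem integrableOn_exp_smul_apply (hβ : 0 < β)
    (hstab : ∀ t : ℝ, 0 ≤ t → ‖NormedSpace.exp (t • M)‖ ≤ c * Real.exp (-β * t))
    {w : ℝ → E} (hw : Continuous w) {K : ℝ} (hK : ∀ s, ‖w s‖ ≤ K) :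
    IntegrableOn (fun u => NormedSpace.exp (u • M) (w u)) (Ioi 0) := by
  refine ((exp_neg_integrableOn_Ioi 0 hβ).const_mul (c * K)).mono'
    ((continuous_exp_smul M).clm_apply hw).aestronglyMeasurable ?_
  filter_upwards [ae_restrict_mem measurableSet_Ioi] with u hu
  exact norm_exp_smul_apply_le hstab (le_of_lt hu) (hK u)

variable {v : ℝ → E} {K : ℝ}

theorem hasDerivAt_expConvolution (hβ : 0 < β)
    (hstab : ∀ t : ℝ, 0 ≤ t → ‖NormedSpace.exp (t • M)‖ ≤ c * Real.exp (-β * t))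
    (hv : ContDiff ℝ 1 v) (hvK : ∀ s, ‖v s‖ ≤ K) (hv'K : ∀ s, ‖deriv v s‖ ≤ K) (t : ℝ) :
    HasDerivAt (expConvolution M v) (expConvolution M (deriv v) t) t := by
  have hshift : ∀ {w : ℝ → E}, Continuous w → ∀ s,
      AEStronglyMeasurable (fun u => NormedSpace.exp (u • M) (w (s - u)))
        (volume.restrict (Ioi 0)) := fun hw s =>
    ((continuous_exp_smul M).clm_apply (hw.comp (continuous_sub_left s))).aestronglyMeasurable
  refine (hasDerivAt_integral_of_dominated_loc_of_deriv_le
    (F' := fun s u => NormedSpace.exp (u • M) (deriv v (s - u)))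
    (Metric.ball_mem_nhds t zero_lt_one) (Eventually.of_forall (hshift hv.continuous))
    (integrableOn_exp_smul_apply hβ hstab (hv.continuous.comp (continuous_sub_left t))
      (hvK <| t - ·))
    (hshift (hv.continuous_deriv le_rfl) t) ?_
    ((exp_neg_integrableOn_Ioi 0 hβ).const_mul (c * K)) ?_).2
  · filter_upwards [ae_restrict_mem measurableSet_Ioi] with u hu s _
    exact norm_exp_smul_apply_le hstab (le_of_lt hu) (hv'K _)
  · refine Eventually.of_forall fun u s _ => ?_
    exact (NormedSpace.exp (u • M)).hasFDerivAt.comp_hasDerivAt s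
      ((hv.differentiable one_ne_zero (s - u)).hasDerivAt.comp_sub_const s u)

theorem expConvolution_deriv (hβ : 0 < β)
    (hstab : ∀ t : ℝ, 0 ≤ t → ‖NormedSpace.exp (t • M)‖ ≤ c * Real.exp (-β * t))
    (hv : ContDiff ℝ 1 v) (hvK : ∀ s, ‖v s‖ ≤ K) (hv'K : ∀ s, ‖deriv v s‖ ≤ K) (t : ℝ) :
    expConvolution M (deriv v) t = M (expConvolution M v t) + v t := by
  set f : ℝ → E := fun u => NormedSpace.exp (u • M) (v (t - u))
  set g : ℝ → E := fun u => NormedSpace.exp (u • M) (deriv v (t - u))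
  have hf : IntegrableOn f (Ioi 0) :=
    integrableOn_exp_smul_apply hβ hstab (hv.continuous.comp (continuous_sub_left t)) (hvK <| t - ·)
  have hg : IntegrableOn g (Ioi 0) :=
    integrableOn_exp_smul_apply hβ hstab
      ((hv.continuous_deriv le_rfl).comp (continuous_sub_left t)) (hv'K <| t - ·)
  have hf' : ∀ u, HasDerivAt f (M (f u) - g u) u := fun u => by
    have := (hasDerivAt_exp_smul_const' M u).clm_apply
      ((hv.differentiable one_ne_zero (t - u)).hasDerivAt.comp_const_sub t u)
    simpa [f, g, sub_eq_add_neg] using this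
  have hf0 : f 0 = v t := by simp [f]
  have hparts : ∫ u in Ioi (0 : ℝ), (M (f u) - g u) = 0 - f 0 :=
    integral_Ioi_of_hasDerivAt_of_tendsto (hf' 0).continuousAt.continuousWithinAt
      (fun u _ => hf' u) ((M.integrable_comp hf).sub hg)
      (tendsto_exp_smul_apply_atTop_zero hβ hstab (hvK <| t - ·))
  rw [integral_sub (M.integrable_comp hf) hg, M.integral_comp_comm hf, hf0, zero_sub] at hparts
  change ∫ u in Ioi (0 : ℝ), g u = M (∫ u in Ioi (0 : ℝ), f u) + v t
  rw [← neg_neg (v t), ← hparts]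
  abel

end Stable

theorem stmt_0_general (n : ℕ)
    (M : EuclideanSpace ℝ (Fin n) →L[ℝ] EuclideanSpace ℝ (Fin n))
    (c β : ℝ) (hβ : 0 < β)
    (hstab : ∀ t : ℝ, 0 ≤ t → ‖NormedSpace.exp (t • M)‖ ≤ c * Real.exp (-β * t))
    (xQ : ℝ → EuclideanSpace ℝ (Fin n)) (hxQ : ContDiff ℝ 2 xQ)
    (C : ℝ) (hbdd : ∀ t : ℝ, ‖xQ t‖ ≤ C ∧ ‖deriv xQ t‖ ≤ C ∧ ‖deriv (deriv xQ) t‖ ≤ C)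
    (x : ℝ → EuclideanSpace ℝ (Fin n))
    (hx : ∀ t : ℝ, x t = -∫ u in Ioi (0:ℝ), NormedSpace.exp (u • M) (M (xQ (t - u)))) :
    ∀ t : ℝ, HasDerivAt x (M (x t - xQ t)) t := by
  set v : ℝ → EuclideanSpace ℝ (Fin n) := fun s => M (xQ s)
  have hv : ContDiff ℝ 1 v := M.contDiff.comp (hxQ.of_le one_le_two)
  have hv' : deriv v = fun s => M (deriv xQ s) := funext fun s =>
    (M.hasFDerivAt.comp_hasDerivAt s ((hxQ.differentiable two_ne_zero) s).hasDerivAt).deriv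
  have hvK : ∀ s, ‖v s‖ ≤ ‖M‖ * C := fun s => M.le_opNorm_of_le (hbdd s).1
  have hv'K : ∀ s, ‖deriv v s‖ ≤ ‖M‖ * C := fun s => hv' ▸ M.le_opNorm_of_le (hbdd s).2.1
  have hxv : x = fun s => -expConvolution M v s := funext hx
  intro t
  rw [hxv]
  refine (hasDerivAt_expConvolution hβ hstab hv hvK hv'K t).neg.congr_deriv ?_
  rw [expConvolution_deriv hβ hstab hv hvK hv'K t, map_sub, map_neg, neg_add, ← sub_eq_add_neg]

/-- For an invertible, exponentially stable linear operator `M` on `ℝⁿ`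
and a `C²` quasi-static equilibrium `xQ` with bounded first and second derivatives
(and `xQ` itself bounded), the function `x(t) = -∫₀^∞ e^{Mu} M xQ(t-u) du` satisfies
`x'(t) = M (x(t) - xQ(t))` for all `t`. -/
theorem stmt_0 (n : ℕ)
    (M : EuclideanSpace ℝ (Fin n) →L[ℝ] EuclideanSpace ℝ (Fin n))
    (hMinv : IsUnit M)
    (c β : ℝ) (hc : 0 < c) (hβ : 0 < β)
    (hstab : ∀ t : ℝ, 0 ≤ t → ‖NormedSpace.exp (t • M)‖ ≤ c * Real.exp (-β * t))
    (xQ : ℝ → EuclideanSpace ℝ (Fin n)) (hxQ : ContDiff ℝ 2 xQ)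
    (C : ℝ) (hbdd : ∀ t : ℝ, ‖xQ t‖ ≤ C ∧ ‖deriv xQ t‖ ≤ C ∧ ‖deriv (deriv xQ) t‖ ≤ C)
    (x : ℝ → EuclideanSpace ℝ (Fin n))
    (hx : ∀ t : ℝ, x t = -∫ u in Ioi (0:ℝ), NormedSpace.exp (u • M) (M (xQ (t - u)))) :
    ∀ t : ℝ, HasDerivAt x (M (x t - xQ t)) t :=
  stmt_0_general n M c β hβ hstab xQ hxQ C hbdd x hx
end

section
/- Suppose M is a real n×n matrix with ‖e^{Mu}‖ ≤ c e^{-βu} for all u ≥ 0 (c, β > 0), x̃ : ℝ → ℝⁿ is C¹, and x(t) - x̃(t) = -∫₀^∞ e^{Mu} x̃'(t-u) du. If sup_{s ≤ t} |x̃'(s)| = r_max(t) < ∞, then |x(t) - x̃(t)| ≤ (c/β) · r_max(t). In particular, if (c/β) r_max(t) < R then |x(t) - x̃(t)| < R (the system avoids R-tipping at time t). -/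
open Set MeasureTheory

theorem integral_Ioi_zero_exp_neg_mul {β : ℝ} (hβ : 0 < β) :
    ∫ u in Ioi (0 : ℝ), Real.exp (-β * u) = 1 / β := by
  rw [integral_exp_mul_Ioi (neg_neg_iff_pos.mpr hβ), mul_zero, Real.exp_zero, div_neg,
    neg_div, neg_neg]

theorem norm_integral_Ioi_le_of_norm_le_exp {E : Type*} [NormedAddCommGroup E]
    [NormedSpace ℝ E] {g : ℝ → E} {C β : ℝ} (hβ : 0 < β)
    (hg : ∀ u, 0 < u → ‖g u‖ ≤ C * Real.exp (-β * u)) :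
    ‖∫ u in Ioi (0 : ℝ), g u‖ ≤ C / β := by
  have hdom : IntegrableOn (fun u ↦ C * Real.exp (-β * u)) (Ioi 0) :=
    (exp_neg_integrableOn_Ioi 0 hβ).const_mul C
  calc ‖∫ u in Ioi (0 : ℝ), g u‖
      ≤ ∫ u in Ioi (0 : ℝ), C * Real.exp (-β * u) :=
        norm_integral_le_of_norm_le hdom <|
          (ae_restrict_mem measurableSet_Ioi).mono fun u hu ↦ hg u hu
    _ = C / β := by rw [integral_const_mul, integral_Ioi_zero_exp_neg_mul hβ, mul_one_div]

theorem norm_integral_Ioi_apply_le_of_exp_decay {E : Type*} [NormedAddCommGroup E]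
    [NormedSpace ℝ E] {A : ℝ → E →L[ℝ] E} {f : ℝ → E} {c β r : ℝ} (hβ : 0 < β) (hr : 0 ≤ r)
    (hA : ∀ u, 0 < u → ‖A u‖ ≤ c * Real.exp (-β * u)) (hf : ∀ u, 0 < u → ‖f u‖ ≤ r) :
    ‖∫ u in Ioi (0 : ℝ), A u (f u)‖ ≤ c / β * r := by
  rw [div_mul_eq_mul_div]
  refine norm_integral_Ioi_le_of_norm_le_exp hβ fun u hu ↦ ?_
  calc ‖A u (f u)‖ ≤ ‖A u‖ * ‖f u‖ := (A u).le_opNorm _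
    _ ≤ ‖A u‖ * r := mul_le_mul_of_nonneg_left (hf u hu) (norm_nonneg _)
    _ ≤ c * Real.exp (-β * u) * r := mul_le_mul_of_nonneg_right (hA u hu) hr
    _ = c * r * Real.exp (-β * u) := mul_right_comm _ _ _

theorem stmt_4_general (n : ℕ)
    (M : EuclideanSpace ℝ (Fin n) →L[ℝ] EuclideanSpace ℝ (Fin n))
    (c β : ℝ) (hβ : 0 < β)
    (hstab : ∀ u : ℝ, 0 ≤ u → ‖NormedSpace.exp (u • M)‖ ≤ c * Real.exp (-β * u))
    (xQ : ℝ → EuclideanSpace ℝ (Fin n))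
    (x : ℝ → EuclideanSpace ℝ (Fin n)) (t : ℝ)
    (hx : x t - xQ t = -∫ u in Ioi (0:ℝ), NormedSpace.exp (u • M) (deriv xQ (t - u)))
    (rmax : ℝ) (hrmax : ∀ s : ℝ, s ≤ t → ‖deriv xQ s‖ ≤ rmax) :
    ‖x t - xQ t‖ ≤ (c / β) * rmax ∧
      (∀ R : ℝ, (c / β) * rmax < R → ‖x t - xQ t‖ < R) := by
  have hbound : ‖x t - xQ t‖ ≤ (c / β) * rmax := by
    rw [hx, norm_neg]
    exact norm_integral_Ioi_apply_le_of_exp_decay hβ ((norm_nonneg _).trans (hrmax t le_rfl))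
      (fun u hu ↦ hstab u hu.le) (fun u hu ↦ hrmax _ (by linarith))
  exact ⟨hbound, fun R hR ↦ hbound.trans_lt hR⟩

/-- If `‖e^{Mu}‖ ≤ c e^{-βu}` for `u ≥ 0`, `xQ` (the quasi-static
equilibrium `x̃`) is `C¹`, `x(t) - xQ(t) = -∫₀^∞ e^{Mu} xQ'(t-u) du`, and
`rmax` bounds `‖xQ'(s)‖` for all `s ≤ t`, then `‖x(t) - xQ(t)‖ ≤ (c/β) rmax`;
in particular if `(c/β) rmax < R` then `‖x(t) - xQ(t)‖ < R` (no R-tipping at time `t`). -/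
theorem stmt_4 (n : ℕ)
    (M : EuclideanSpace ℝ (Fin n) →L[ℝ] EuclideanSpace ℝ (Fin n))
    (c β : ℝ) (hc : 0 < c) (hβ : 0 < β)
    (hstab : ∀ u : ℝ, 0 ≤ u → ‖NormedSpace.exp (u • M)‖ ≤ c * Real.exp (-β * u))
    (xQ : ℝ → EuclideanSpace ℝ (Fin n)) (hxQ : ContDiff ℝ 1 xQ)
    (x : ℝ → EuclideanSpace ℝ (Fin n)) (t : ℝ)
    (hx : x t - xQ t = -∫ u in Ioi (0:ℝ), NormedSpace.exp (u • M) (deriv xQ (t - u)))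
    (rmax : ℝ) (hrmax : ∀ s : ℝ, s ≤ t → ‖deriv xQ s‖ ≤ rmax) :
    ‖x t - xQ t‖ ≤ (c / β) * rmax ∧
      (∀ R : ℝ, (c / β) * rmax < R → ‖x t - xQ t‖ < R) :=
  stmt_4_general n M c β hβ hstab xQ x t hx rmax hrmax
end

section
/- For the scalar linear tracking model dx/dt = m(x - x̃(t)) with m < 0 and x̃ C¹ with |x̃'(t)| ≤ r_max for all t, the particular solution x(t) = -∫₀^∞ e^{mu} m x̃(t-u) du satisfies |x(t) - x̃(t)| ≤ r_max/|m| for all t. Hence if r_max < R|m|, the solution never leaves the tipping radius R around the quasi-static equilibrium x̃. -/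
open Set MeasureTheory Real
open scoped NNReal

/-! Since `∫₀^∞ e^{mu} m du = -1`, the deviation is
`x(t) - x̃(t) = -∫₀^∞ e^{mu} m (x̃(t-u) - x̃(t)) du`.
The derivative bound makes `x̃` `r_max`-Lipschitz, so the integrand is at most
`|m| r_max u e^{mu}`, whose integral is `r_max / |m|`. -/

lemma integral_mul_exp_mul_Ioi {m : ℝ} (hm : m < 0) :
    ∫ u in Ioi (0 : ℝ), u * exp (m * u) = 1 / m ^ 2 := by
  have hGamma := integral_rpow_mul_exp_neg_mul_Ioi (a := 2) two_pos (neg_pos.mpr hm)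
  norm_num [Real.rpow_two, Gamma_two] at hGamma
  simpa [div_pow] using hGamma

lemma integrableOn_mul_exp_mul_Ioi {m : ℝ} (hm : m < 0) :
    IntegrableOn (fun u : ℝ => u * exp (m * u)) (Ioi 0) :=
  .of_integral_ne_zero (by rw [integral_mul_exp_mul_Ioi hm]; have := hm.ne; positivity)

section Lipschitz

variable {m : ℝ} {f : ℝ → ℝ} {K : ℝ≥0}

lemma abs_exp_mul_mul_sub_le (hf : LipschitzWith K f) (t : ℝ) {u : ℝ} (hu : 0 ≤ u) :
    |exp (m * u) * m * (f (t - u) - f t)| ≤ |m| * K * (u * exp (m * u)) := by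
  have hLip : |f (t - u) - f t| ≤ K * u := by
    simpa [Real.dist_eq, abs_of_nonneg hu] using hf.dist_le_mul (t - u) t
  rw [abs_mul, abs_mul, abs_of_pos (exp_pos _)]
  calc exp (m * u) * |m| * |f (t - u) - f t| ≤ exp (m * u) * |m| * (K * u) := by gcongr
    _ = |m| * K * (u * exp (m * u)) := by ring

lemma integrableOn_exp_mul_mul_sub (hm : m < 0) (hf : LipschitzWith K f) (t : ℝ) :
    IntegrableOn (fun u => exp (m * u) * m * (f (t - u) - f t)) (Ioi 0) := by
  refine ((integrableOn_mul_exp_mul_Ioi hm).const_mul (|m| * K)).mono' ?_ ?_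
  · have := hf.continuous
    exact (by fun_prop : Continuous fun u => exp (m * u) * m * (f (t - u) - f t))
      |>.aestronglyMeasurable
  · filter_upwards [ae_restrict_mem measurableSet_Ioi] with u hu
    exact abs_exp_mul_mul_sub_le hf t hu.le

lemma neg_integral_exp_mul_mul_comp_sub_sub (hm : m < 0) (hf : LipschitzWith K f) (t : ℝ) :
    (-∫ u in Ioi 0, exp (m * u) * m * f (t - u)) - f t
      = -∫ u in Ioi 0, exp (m * u) * m * (f (t - u) - f t) := by
  have hmass : ∫ u in Ioi 0, exp (m * u) * m * f t = -f t := by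
    rw [integral_mul_const, integral_mul_const, integral_exp_mul_Ioi hm 0]
    field_simp [hm.ne]
    simp
  have hconst : IntegrableOn (fun u => exp (m * u) * m * f t) (Ioi 0) :=
    ((integrableOn_exp_mul_Ioi hm 0).mul_const m).mul_const (f t)
  have hsplit : ∫ u in Ioi 0, exp (m * u) * m * f (t - u)
      = (∫ u in Ioi 0, exp (m * u) * m * (f (t - u) - f t))
        + ∫ u in Ioi 0, exp (m * u) * m * f t := by
    rw [← integral_add (integrableOn_exp_mul_mul_sub hm hf t) hconst]
    congr 1 with u
    ring
  rw [hsplit, hmass]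
  ring

theorem abs_neg_integral_exp_mul_mul_comp_sub_sub_le (hm : m < 0) (hf : LipschitzWith K f)
    (t : ℝ) : |(-∫ u in Ioi 0, exp (m * u) * m * f (t - u)) - f t| ≤ K / |m| := by
  rw [neg_integral_exp_mul_mul_comp_sub_sub hm hf, abs_neg, ← Real.norm_eq_abs]
  calc ‖∫ u in Ioi 0, exp (m * u) * m * (f (t - u) - f t)‖
      ≤ ∫ u in Ioi 0, |m| * K * (u * exp (m * u)) := by
        refine norm_integral_le_of_norm_le ((integrableOn_mul_exp_mul_Ioi hm).const_mul _) ?_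
        filter_upwards [ae_restrict_mem measurableSet_Ioi] with u hu
        exact abs_exp_mul_mul_sub_le hf t hu.le
    _ = K / |m| := by
        rw [integral_const_mul, integral_mul_exp_mul_Ioi hm, ← sq_abs]
        field_simp [abs_pos.mpr hm.ne]

end Lipschitz

/-- For the scalar linear tracking model `dx/dt = m(x - xQ(t))` with
`m < 0` and `xQ` (the quasi-static equilibrium `x̃`) `C¹` with `|xQ'(t)| ≤ rmax`, the
particular solution `x(t) = -∫₀^∞ e^{mu} m xQ(t-u) du` satisfies
`|x(t) - xQ(t)| ≤ rmax/|m|` for all `t`; hence if `rmax < R|m|` the solution never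
leaves the tipping radius `R` around `xQ`. -/
theorem stmt_19 (m : ℝ) (hm : m < 0)
    (xQ : ℝ → ℝ) (hxQ : ContDiff ℝ 1 xQ)
    (rmax : ℝ) (hrmax : ∀ t : ℝ, |deriv xQ t| ≤ rmax)
    (x : ℝ → ℝ)
    (hx : ∀ t : ℝ, x t = -∫ u in Ioi (0:ℝ), Real.exp (m * u) * m * xQ (t - u)) :
    (∀ t : ℝ, |x t - xQ t| ≤ rmax / |m|) ∧
    (∀ R : ℝ, rmax < R * |m| → ∀ t : ℝ, |x t - xQ t| < R) := by
  have hr0 : 0 ≤ rmax := (abs_nonneg _).trans (hrmax 0)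
  have hLip : LipschitzWith ⟨rmax, hr0⟩ xQ :=
    lipschitzWith_of_nnnorm_deriv_le (hxQ.differentiable one_ne_zero) fun t =>
      NNReal.coe_le_coe.mp (hrmax t)
  have hbound (t : ℝ) : |x t - xQ t| ≤ rmax / |m| := by
    rw [hx t]
    exact abs_neg_integral_exp_mul_mul_comp_sub_sub_le hm hLip t
  refine ⟨hbound, fun R hR t => (hbound t).trans_lt ?_⟩
  rwa [div_lt_iff₀ (abs_pos.mpr hm.ne)]
end
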